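/- arXiv:2405.17307 — 9 statements merged into one kernel-verified Lean document; each statement's English description precedes it below -/
import Mathlib

section
/- For all natural numbers s, x, y, k, if 2^k ≤ (s XOR y) < 2^(k+1) and (s XOR x) < 2^k, then 2^k ≤ (x XOR y) < 2^(k+1), where XOR denotes bitwise exclusive-or of natural numbers. -/
/-- If a peer `x` is strictly closer (in XOR distance) to the server `s`
than the band `[2^k, 2^(k+1))`, then `x` lies in the same XOR-distance band
from `y` as the server `s` does. -/
theorem stmt2 (s x y k : ℕ) (h₁ : 2 ^ k ≤ s ^^^ y) (h₂ : s ^^^ y < 2 ^ (k + 1))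
    (hx : s ^^^ x < 2 ^ k) :
    2 ^ k ≤ x ^^^ y ∧ x ^^^ y < 2 ^ (k + 1) := by
  have hxy : x ^^^ y = (s ^^^ x) ^^^ (s ^^^ y) := by
    rw [← Nat.xor_assoc, Nat.xor_comm _ s, ← Nat.xor_assoc, Nat.xor_self, Nat.zero_xor]
  set a := s ^^^ x with ha
  set b := s ^^^ y with hb
  have hbk : b.testBit k = true := by
    rw [Nat.testBit_eq_decide_div_mod_eq]
    have : b / 2 ^ k = 1 := by
      apply Nat.div_eq_of_lt_le
      · simpa using h₁
      · rw [pow_succ] at h₂; omega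
    simp [this]
  have hak : a.testBit k = false := Nat.testBit_lt_two_pow hx
  constructor
  · rw [hxy]
    apply Nat.ge_two_pow_of_testBit (i := k)
    rw [Nat.testBit_xor, hak, hbk]
    rfl
  · rw [hxy]
    apply Nat.lt_pow_two_of_testBit
    intro i hi
    rw [Nat.testBit_xor]
    have h1 : a.testBit i = false :=
      Nat.testBit_lt_two_pow (lt_of_lt_of_le hx (Nat.pow_le_pow_right (by norm_num) (by omega)))
    have h2 : b.testBit i = false :=
      Nat.testBit_lt_two_pow (lt_of_lt_of_le h₂ (Nat.pow_le_pow_right (by norm_num) hi))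
    simp [h1, h2]
end

section
/- Let n, t be natural numbers with t < n, and let x, y < 2^n. If x >>> (n − t) = y >>> (n − t) and x >>> (n − t − 1) ≠ y >>> (n − t − 1) (i.e., the common prefix length of the n-bit representations of x and y is exactly t), then 2^(n−t−1) ≤ (x XOR y) < 2^(n−t). -/
namespace Nat

theorem shiftRight_eq_zero_iff_lt {a k : ℕ} : a >>> k = 0 ↔ a < 2 ^ k := by
  rw [shiftRight_eq_div_pow, Nat.div_eq_zero_iff_lt (Nat.two_pow_pos k)]

theorem xor_shiftRight_eq_zero_iff {x y k : ℕ} : (x ^^^ y) >>> k = 0 ↔ x >>> k = y >>> k := by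
  rw [shiftRight_xor_distrib, _root_.xor_eq_zero_iff]

theorem xor_lt_two_pow_iff_shiftRight_eq {x y k : ℕ} : x ^^^ y < 2 ^ k ↔ x >>> k = y >>> k := by
  rw [← shiftRight_eq_zero_iff_lt, xor_shiftRight_eq_zero_iff]

end Nat

theorem stmt5_general (n t x y : ℕ)
    (h₁ : x >>> (n - t) = y >>> (n - t))
    (h₂ : x >>> (n - t - 1) ≠ y >>> (n - t - 1)) :
    2 ^ (n - t - 1) ≤ x ^^^ y ∧ x ^^^ y < 2 ^ (n - t) :=
  ⟨not_lt.mp (mt Nat.xor_lt_two_pow_iff_shiftRight_eq.mp h₂),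
    Nat.xor_lt_two_pow_iff_shiftRight_eq.mpr h₁⟩

/-- If the common prefix length of the `n`-bit identifiers `x` and `y` is
exactly `t`, then their XOR distance lies in the band `[2^(n-t-1), 2^(n-t))`. -/
theorem stmt5 (n t x y : ℕ) (ht : t < n) (hx : x < 2 ^ n) (hy : y < 2 ^ n)
    (h₁ : x >>> (n - t) = y >>> (n - t))
    (h₂ : x >>> (n - t - 1) ≠ y >>> (n - t - 1)) :
    2 ^ (n - t - 1) ≤ x ^^^ y ∧ x ^^^ y < 2 ^ (n - t) :=
  stmt5_general n t x y h₁ h₂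
end

section
/- Let p and q be distinct primes, M = p·q, and λ = lcm(p−1, q−1). For every natural number r coprime to M: r^(M·λ) ≡ 1 (mod M²). -/
lemma aux (p : ℕ) (hp : p.Prime) (r n : ℕ) (hr : Nat.Coprime r p)
    (hd : p * (p - 1) ∣ n) : r ^ n ≡ 1 [MOD p ^ 2] := by
  have hcop : Nat.Coprime r (p ^ 2) := hr.pow_right 2
  have htot : Nat.totient (p ^ 2) = p * (p - 1) := by
    rw [Nat.totient_prime_pow hp (by norm_num)]; ring_nf
  have h := Nat.ModEq.pow_totient hcop
  rw [htot] at h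
  obtain ⟨k, hk⟩ := hd
  calc r ^ n = (r ^ (p * (p-1))) ^ k := by rw [← pow_mul, hk]
    _ ≡ 1 ^ k [MOD p ^ 2] := h.pow k
    _ = 1 := one_pow k

/-- In Paillier, the randomness factor `r^M` vanishes when raised to the
power `λ = lcm(p-1, q-1)` modulo `M²`. -/
theorem stmt7 (p q : ℕ) (hp : p.Prime) (hq : q.Prime) (hpq : p ≠ q)
    (M lam : ℕ) (hM : M = p * q) (hlam : lam = Nat.lcm (p - 1) (q - 1))
    (r : ℕ) (hr : Nat.Coprime r M) :
    r ^ (M * lam) ≡ 1 [MOD M ^ 2] := by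
  subst hM hlam
  have hrp : Nat.Coprime r p := Nat.Coprime.coprime_dvd_right ⟨q, rfl⟩ hr
  have hrq : Nat.Coprime r q := Nat.Coprime.coprime_dvd_right ⟨p, mul_comm p q⟩ hr
  have hdp : p * (p - 1) ∣ p * q * Nat.lcm (p - 1) (q - 1) := by
    rw [mul_comm p q, mul_assoc]
    exact Dvd.dvd.mul_left (mul_dvd_mul_left p (Nat.dvd_lcm_left _ _)) q
  have hdq : q * (q - 1) ∣ p * q * Nat.lcm (p - 1) (q - 1) := by
    rw [mul_assoc]
    exact Dvd.dvd.mul_left (mul_dvd_mul_left q (Nat.dvd_lcm_right _ _)) p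
  have h1 := aux p hp r _ hrp hdp
  have h2 := aux q hq r _ hrq hdq
  have hcop : Nat.Coprime (p ^ 2) (q ^ 2) :=
    (Nat.coprime_primes hp hq |>.mpr hpq).pow _ _
  have := (Nat.modEq_and_modEq_iff_modEq_mul hcop).mp ⟨h1, h2⟩
  rwa [show (p*q)^2 = p^2 * q^2 by ring]
end

section
/- Let p and q be distinct primes, M = p·q, and λ = lcm(p−1, q−1). For all natural numbers m and every r coprime to M: ((1 + M)^m · r^M)^λ ≡ 1 + m·λ·M (mod M²). -/
lemma binom_aux (M k : ℕ) : (1 + M) ^ k ≡ 1 + k * M [MOD M ^ 2] := by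
  induction k with
  | zero => simpa using Nat.ModEq.refl 1
  | succ n ih =>
    have : (1 + M) ^ (n + 1) = (1 + M) ^ n * (1 + M) := by ring
    rw [this]
    calc (1 + M) ^ n * (1 + M)
        ≡ (1 + n * M) * (1 + M) [MOD M ^ 2] := ih.mul_right _
      _ = (1 + (n + 1) * M) + n * M ^ 2 := by ring
      _ ≡ (1 + (n + 1) * M) + 0 [MOD M ^ 2] := by
          exact Nat.ModEq.add_left _ (Nat.modEq_zero_iff_dvd.mpr ⟨n, by ring⟩)
      _ = 1 + (n + 1) * M := by ring

lemma prime_sq_aux (p : ℕ) (hp : p.Prime) (r N : ℕ) (hr : Nat.Coprime r p)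
    (hdvd : p * (p - 1) ∣ N) : r ^ N ≡ 1 [MOD p ^ 2] := by
  have hcop : Nat.Coprime r (p ^ 2) := hr.pow_right 2
  have htot : r ^ (Nat.totient (p ^ 2)) ≡ 1 [MOD p ^ 2] := Nat.ModEq.pow_totient hcop
  have ht : Nat.totient (p ^ 2) = p * (p - 1) := by
    rw [Nat.totient_prime_pow hp (by norm_num)]; ring
  rw [ht] at htot
  obtain ⟨t, rfl⟩ := hdvd
  calc r ^ (p * (p - 1) * t) = (r ^ (p * (p - 1))) ^ t := by rw [pow_mul]
    _ ≡ 1 ^ t [MOD p ^ 2] := htot.pow t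
    _ = 1 := one_pow t

/-- Core Paillier decryption identity: raising a ciphertext
`(1+M)^m · r^M` to the power `λ` yields `1 + mλM` modulo `M²`. -/
theorem stmt8 (p q : ℕ) (hp : p.Prime) (hq : q.Prime) (hpq : p ≠ q)
    (M lam : ℕ) (hM : M = p * q) (hlam : lam = Nat.lcm (p - 1) (q - 1))
    (m r : ℕ) (hr : Nat.Coprime r M) :
    ((1 + M) ^ m * r ^ M) ^ lam ≡ 1 + m * lam * M [MOD M ^ 2] := by
  have hrp : Nat.Coprime r p := by
    have := hr; rw [hM] at this; exact Nat.Coprime.coprime_dvd_right ⟨q, rfl⟩ this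
  have hrq : Nat.Coprime r q := by
    have := hr; rw [hM] at this; exact Nat.Coprime.coprime_dvd_right ⟨p, mul_comm p q⟩ this
  -- r^(M*lam) ≡ 1 mod p^2 and mod q^2
  have hdp : p * (p - 1) ∣ M * lam := by
    rw [hM, hlam]
    exact mul_dvd_mul (dvd_mul_right p q) (Nat.dvd_lcm_left _ _)
  have hdq : q * (q - 1) ∣ M * lam := by
    rw [hM, hlam]
    exact mul_dvd_mul (dvd_mul_left q p) (Nat.dvd_lcm_right _ _)
  have h1 : r ^ (M * lam) ≡ 1 [MOD p ^ 2] := prime_sq_aux p hp r _ hrp hdp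
  have h2 : r ^ (M * lam) ≡ 1 [MOD q ^ 2] := prime_sq_aux q hq r _ hrq hdq
  have hcop : Nat.Coprime (p ^ 2) (q ^ 2) :=
    Nat.Coprime.pow 2 2 ((Nat.coprime_primes hp hq).mpr hpq)
  have hrM : r ^ (M * lam) ≡ 1 [MOD M ^ 2] := by
    have : M ^ 2 = p ^ 2 * q ^ 2 := by rw [hM]; ring
    rw [this]
    exact (Nat.modEq_and_modEq_iff_modEq_mul hcop).mp ⟨h1, h2⟩
  have hbin : (1 + M) ^ (m * lam) ≡ 1 + m * lam * M [MOD M ^ 2] := binom_aux M (m * lam)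
  calc ((1 + M) ^ m * r ^ M) ^ lam
      = (1 + M) ^ (m * lam) * r ^ (M * lam) := by rw [mul_pow, ← pow_mul, ← pow_mul]
    _ ≡ (1 + m * lam * M) * 1 [MOD M ^ 2] := hbin.mul hrM
    _ = 1 + m * lam * M := by ring
end

section
/- Let p and q be distinct primes, M = p·q, and λ = lcm(p−1, q−1), and assume gcd(λ, M) = 1. Let m < M and let r be coprime to M, and set c = (1+M)^m · r^M. Let u = (c^λ) mod M². Then M divides u − 1, and in ZMod M the element ((u − 1)/M) · λ⁻¹ equals m (where λ⁻¹ is the inverse of λ modulo M). -/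
/-- Binomial step: `(1+M)^k ≡ 1 + k·M (mod M²)`. -/
lemma paillier_binom (M : ℕ) : ∀ k : ℕ, (1 + M) ^ k ≡ 1 + k * M [MOD M ^ 2] := by
  intro k
  induction k with
  | zero => simpa using Nat.ModEq.refl 1
  | succ k ih =>
    calc (1 + M) ^ (k + 1) = (1 + M) ^ k * (1 + M) := pow_succ _ _
      _ ≡ (1 + k * M) * (1 + M) [MOD M ^ 2] := ih.mul_right _
      _ = (1 + (k + 1) * M) + k * M ^ 2 := by ring
      _ ≡ (1 + (k + 1) * M) + 0 [MOD M ^ 2] :=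
          Nat.ModEq.add_left _ ((Nat.modEq_zero_iff_dvd).2 (Dvd.intro_left k rfl))
      _ = 1 + (k + 1) * M := by ring

/-- If `r` is coprime to prime `p` and `(p-1) ∣ lam`, `p ∣ N`, then `r^(N*lam) ≡ 1 mod p²`. -/
lemma paillier_unit (p r N lam : ℕ) (hp : p.Prime) (hrp : Nat.Coprime r p)
    (hd : p - 1 ∣ lam) (hN : p ∣ N) : r ^ (N * lam) ≡ 1 [MOD p ^ 2] := by
  have hco : Nat.Coprime r (p ^ 2) := hrp.pow_right 2
  have htot : r ^ Nat.totient (p ^ 2) ≡ 1 [MOD p ^ 2] := Nat.ModEq.pow_totient hco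
  have htval : Nat.totient (p ^ 2) = p * (p - 1) := by
    rw [Nat.totient_prime_pow hp (by norm_num)]; ring
  have hdvd : p * (p - 1) ∣ N * lam := mul_dvd_mul hN hd
  obtain ⟨e, he⟩ := hdvd
  calc r ^ (N * lam) = (r ^ (p * (p - 1))) ^ e := by rw [← pow_mul, he]
    _ ≡ 1 ^ e [MOD p ^ 2] := (htval ▸ htot).pow e
    _ = 1 := one_pow e

/-- Correctness of Paillier decryption: for a ciphertext
`c = (1+M)^m · r^M` with `m < M`, computing `u = c^λ mod M²` and then
`L(u) · λ⁻¹ mod M` with `L(u) = (u-1)/M` recovers the plaintext `m`. -/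
theorem stmt9 (p q : ℕ) (hp : p.Prime) (hq : q.Prime) (hpq : p ≠ q)
    (M lam : ℕ) (hM : M = p * q) (hlam : lam = Nat.lcm (p - 1) (q - 1))
    (hco : Nat.gcd lam M = 1)
    (m r : ℕ) (hm : m < M) (hr : Nat.Coprime r M)
    (c u : ℕ) (hc : c = (1 + M) ^ m * r ^ M) (hu : u = c ^ lam % M ^ 2) :
    M ∣ u - 1 ∧ (((u - 1) / M : ℕ) : ZMod M) * (lam : ZMod M)⁻¹ = (m : ZMod M) := by
  have hMpos : 0 < M := hm.trans_le' (Nat.zero_le m) |>.trans_le le_rfl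
  have hM2 : 2 ≤ M := by
    rw [hM]; calc 2 ≤ 2 * 2 := by norm_num
      _ ≤ p * q := Nat.mul_le_mul hp.two_le hq.two_le
  -- r^(M*lam) ≡ 1 mod M²
  have hrp : Nat.Coprime r p := by
    have := hr; rw [hM] at this; exact (Nat.coprime_mul_iff_right.mp this).1
  have hrq : Nat.Coprime r q := by
    have := hr; rw [hM] at this; exact (Nat.coprime_mul_iff_right.mp this).2
  have h1 : r ^ (M * lam) ≡ 1 [MOD p ^ 2] :=
    paillier_unit p r M lam hp hrp (hlam ▸ Nat.dvd_lcm_left _ _) ⟨q, hM⟩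
  have h2 : r ^ (M * lam) ≡ 1 [MOD q ^ 2] :=
    paillier_unit q r M lam hq hrq (hlam ▸ Nat.dvd_lcm_right _ _) ⟨p, by rw [hM, mul_comm]⟩
  have hcopq : Nat.Coprime (p ^ 2) (q ^ 2) :=
    ((Nat.coprime_primes hp hq).2 hpq).pow 2 2
  have hru : r ^ (M * lam) ≡ 1 [MOD M ^ 2] := by
    have := (Nat.modEq_and_modEq_iff_modEq_mul hcopq).1 ⟨h1, h2⟩
    rwa [show p ^ 2 * q ^ 2 = M ^ 2 by rw [hM]; ring] at this
  -- c^lam ≡ 1 + (m*lam % M)*M mod M²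
  set t := m * lam % M with ht
  have hsplit : m * lam * M = t * M + (m * lam / M) * M ^ 2 := by
    conv_lhs => rw [show m * lam = M * (m * lam / M) + t from (Nat.div_add_mod _ _).symm]
    ring
  have hkey : c ^ lam ≡ 1 + t * M [MOD M ^ 2] := by
    calc c ^ lam = (1 + M) ^ (m * lam) * r ^ (M * lam) := by
          rw [hc, mul_pow, ← pow_mul, ← pow_mul]
      _ ≡ (1 + m * lam * M) * 1 [MOD M ^ 2] := (paillier_binom M (m * lam)).mul hru
      _ = (1 + t * M) + (m * lam / M) * M ^ 2 := by rw [mul_one, hsplit]; ring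
      _ ≡ (1 + t * M) + 0 [MOD M ^ 2] :=
          Nat.ModEq.add_left _ ((Nat.modEq_zero_iff_dvd).2 (Dvd.intro_left _ rfl))
      _ = 1 + t * M := by ring
  have htlt : 1 + t * M < M ^ 2 := by
    have htM : t < M := Nat.mod_lt _ hMpos
    calc 1 + t * M < M + t * M := by omega
      _ = (t + 1) * M := by ring
      _ ≤ M * M := Nat.mul_le_mul_right M htM
      _ = M ^ 2 := (pow_two M).symm
  have huval : u = 1 + t * M := by
    have hk := hkey
    rw [Nat.ModEq] at hk
    rw [hu, hk, Nat.mod_eq_of_lt htlt]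
  have hsub : u - 1 = t * M := by rw [huval]; omega
  constructor
  · exact ⟨t, by rw [hsub]; ring⟩
  · rw [hsub, Nat.mul_div_cancel t hMpos]
    have hcast : (t : ZMod M) = ((m : ZMod M) * lam) := by
      rw [ht, ZMod.natCast_mod, Nat.cast_mul]
    rw [hcast, mul_assoc, ZMod.coe_mul_inv_eq_one lam hco, mul_one]
end

section
/- Let p and q be distinct primes, M = p·q, and λ = lcm(p−1, q−1). Define D : (ZMod M²)ˣ → ZMod M by D(w) = (((w^λ).val − 1)/M : ZMod M), where .val denotes the canonical natural-number representative. Then D is additive on products: for all units u, v of ZMod M², D(u·v) = D(u) + D(v). -/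
-- key lemma: units of ZMod (p*q) raised to lam are 1
lemma aux_pow_lam (p q : ℕ) (hp : p.Prime) (hq : q.Prime) (hpq : p ≠ q)
    (lam : ℕ) (hlam : lam = Nat.lcm (p - 1) (q - 1))
    (x : ZMod (p * q)) (hx : IsUnit x) : x ^ lam = 1 := by
  haveI : Fact p.Prime := ⟨hp⟩
  haveI : Fact q.Prime := ⟨hq⟩
  have hco : Nat.Coprime p q := (Nat.coprime_primes hp hq).mpr hpq
  have e := ZMod.chineseRemainder hco
  have hinj : Function.Injective e := e.injective
  apply hinj
  rw [map_pow, map_one]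
  have h1 : (e x).1 ^ lam = 1 := by
    have hu : IsUnit (e x).1 := (hx.map e.toRingHom).map (RingHom.fst _ _)
    have hne : (e x).1 ≠ 0 := hu.ne_zero
    obtain ⟨k, hk⟩ := Nat.dvd_lcm_left (p-1) (q-1)
    rw [hlam, hk, pow_mul, ZMod.pow_card_sub_one_eq_one hne, one_pow]
  have h2 : (e x).2 ^ lam = 1 := by
    have hu : IsUnit (e x).2 := (hx.map e.toRingHom).map (RingHom.snd _ _)
    have hne : (e x).2 ≠ 0 := hu.ne_zero
    obtain ⟨k, hk⟩ := Nat.dvd_lcm_right (p-1) (q-1)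
    rw [hlam, hk, pow_mul, ZMod.pow_card_sub_one_eq_one hne, one_pow]
  ext
  · simpa using h1
  · simpa using h2

/-- Paillier decryption without the final `λ⁻¹` factor,
`D(w) = L(w^λ mod M²) mod M` with `L(x) = (x-1)/M`, is additive on products
of units modulo `M²`. -/
theorem stmt10 (p q : ℕ) (hp : p.Prime) (hq : q.Prime) (hpq : p ≠ q)
    (M lam : ℕ) (hM : M = p * q) (hlam : lam = Nat.lcm (p - 1) (q - 1))
    (D : (ZMod (M ^ 2))ˣ → ZMod M)
    (hD : ∀ w : (ZMod (M ^ 2))ˣ,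
      D w = ((((w ^ lam : (ZMod (M ^ 2))ˣ) : ZMod (M ^ 2)).val - 1) / M : ℕ))
    (u v : (ZMod (M ^ 2))ˣ) :
    D (u * v) = D u + D v := by
  haveI : Fact p.Prime := ⟨hp⟩
  haveI : Fact q.Prime := ⟨hq⟩
  have hM2 : 1 < M := by
    rw [hM]
    calc 1 = 1 * 1 := rfl
    _ < p * q := Nat.mul_lt_mul'' hp.one_lt hq.one_lt
  have hM0 : M ≠ 0 := by omega
  haveI : NeZero (M ^ 2) := ⟨by positivity⟩
  have hdvd : M ∣ M ^ 2 := ⟨M, sq M⟩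
  have key : ∀ w : (ZMod (M ^ 2))ˣ,
      ((w ^ lam : (ZMod (M ^ 2))ˣ) : ZMod (M ^ 2)).val % M = 1 := by
    intro w
    set x : ZMod (M ^ 2) := ((w ^ lam : (ZMod (M ^ 2))ˣ) : ZMod (M ^ 2)) with hx
    have h1 : ((x.val : ℕ) : ZMod M) = ((1 : ℕ) : ZMod M) := by
      have hcast : (ZMod.castHom hdvd (ZMod M)) x = 1 := by
        rw [hx, Units.val_pow_eq_pow_val, map_pow]
        have hu : IsUnit ((ZMod.castHom hdvd (ZMod M)) (w : ZMod (M ^ 2))) :=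
          (Units.isUnit w).map (ZMod.castHom hdvd (ZMod M))
        subst hM
        exact aux_pow_lam p q hp hq hpq lam hlam _ hu
      rw [ZMod.natCast_val, ← ZMod.castHom_apply (h := hdvd), hcast, Nat.cast_one]
    have h2 := (ZMod.natCast_eq_natCast_iff _ _ _).mp h1
    unfold Nat.ModEq at h2
    rw [h2, Nat.mod_eq_of_lt hM2]
  rw [hD, hD, hD]
  set a : ℕ := ((u ^ lam : (ZMod (M ^ 2))ˣ) : ZMod (M ^ 2)).val with haa
  set b : ℕ := ((v ^ lam : (ZMod (M ^ 2))ˣ) : ZMod (M ^ 2)).val with hbb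
  set c : ℕ := (((u * v) ^ lam : (ZMod (M ^ 2))ˣ) : ZMod (M ^ 2)).val with hcc
  have ha : a % M = 1 := key u
  have hb : b % M = 1 := key v
  have hc : c % M = 1 := key (u * v)
  have hcval : c = a * b % M ^ 2 := by
    rw [hcc, haa, hbb, mul_pow, Units.val_mul, ZMod.val_mul]
  have ha1 : 1 ≤ a := by
    rcases Nat.eq_zero_or_pos a with h | h
    · rw [h] at ha; simp at ha
    · exact h
  have hb1 : 1 ≤ b := by
    rcases Nat.eq_zero_or_pos b with h | h
    · rw [h] at hb; simp at hb
    · exact h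
  have hc1 : 1 ≤ c := by
    rcases Nat.eq_zero_or_pos c with h | h
    · rw [h] at hc; simp at hc
    · exact h
  have hMz : (M : ℤ) ≠ 0 := by exact_mod_cast hM0
  have haM : a ≡ 1 [MOD M] := by unfold Nat.ModEq; rw [ha, Nat.mod_eq_of_lt hM2]
  have hbM : b ≡ 1 [MOD M] := by unfold Nat.ModEq; rw [hb, Nat.mod_eq_of_lt hM2]
  have hcM : c ≡ 1 [MOD M] := by unfold Nat.ModEq; rw [hc, Nat.mod_eq_of_lt hM2]
  have haD : M ∣ a - 1 := (Nat.modEq_iff_dvd' ha1).mp haM.symm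
  have hbD : M ∣ b - 1 := (Nat.modEq_iff_dvd' hb1).mp hbM.symm
  have hcD : M ∣ c - 1 := (Nat.modEq_iff_dvd' hc1).mp hcM.symm
  have hA' : (a : ℤ) - 1 = (M : ℤ) * (((a - 1) / M : ℕ) : ℤ) := by
    have h := Nat.div_mul_cancel haD
    have h2 : (((a - 1) / M : ℕ) : ℤ) * (M : ℤ) = ((a - 1 : ℕ) : ℤ) := by exact_mod_cast h
    rw [Nat.cast_sub ha1, Nat.cast_one] at h2
    linarith
  have hB' : (b : ℤ) - 1 = (M : ℤ) * (((b - 1) / M : ℕ) : ℤ) := by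
    have h := Nat.div_mul_cancel hbD
    have h2 : (((b - 1) / M : ℕ) : ℤ) * (M : ℤ) = ((b - 1 : ℕ) : ℤ) := by exact_mod_cast h
    rw [Nat.cast_sub hb1, Nat.cast_one] at h2
    linarith
  have hC' : (c : ℤ) - 1 = (M : ℤ) * (((c - 1) / M : ℕ) : ℤ) := by
    have h := Nat.div_mul_cancel hcD
    have h2 : (((c - 1) / M : ℕ) : ℤ) * (M : ℤ) = ((c - 1 : ℕ) : ℤ) := by exact_mod_cast h
    rw [Nat.cast_sub hc1, Nat.cast_one] at h2
    linarith
  have hab2 : ((M : ℤ) ^ 2) ∣ (a : ℤ) * (b : ℤ) - (c : ℤ) := by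
    have h2 : ((M ^ 2 : ℕ) : ℤ) ∣ ((a * b : ℕ) : ℤ) - ((a * b % M ^ 2 : ℕ) : ℤ) :=
      Nat.modEq_iff_dvd.mp (Nat.mod_modEq (a * b) (M ^ 2))
    rw [← hcval] at h2
    push_cast at h2 ⊢
    exact h2
  have hident : (M : ℤ) * ((((a - 1) / M : ℕ) : ℤ) + (((b - 1) / M : ℕ) : ℤ)
        - (((c - 1) / M : ℕ) : ℤ)) =
      ((a : ℤ) * (b : ℤ) - (c : ℤ)) - ((a : ℤ) - 1) * ((b : ℤ) - 1) := by
    linear_combination -hA' - hB' + hC'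
  have h2 : ((M : ℤ) ^ 2) ∣ ((a : ℤ) - 1) * ((b : ℤ) - 1) := by
    rw [hA', hB']; exact ⟨(((a - 1) / M : ℕ) : ℤ) * (((b - 1) / M : ℕ) : ℤ), by ring⟩
  have hMM : (M : ℤ) * (M : ℤ) ∣ (M : ℤ) * ((((a - 1) / M : ℕ) : ℤ)
      + (((b - 1) / M : ℕ) : ℤ) - (((c - 1) / M : ℕ) : ℤ)) := by
    rw [hident, ← sq]; exact dvd_sub hab2 h2
  obtain ⟨k, hk⟩ := hMM
  have hfin : (M : ℤ) ∣ (((a - 1) / M : ℕ) : ℤ) + (((b - 1) / M : ℕ) : ℤ)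
      - (((c - 1) / M : ℕ) : ℤ) :=
    ⟨k, mul_left_cancel₀ hMz (by rw [hk]; ring)⟩
  rw [← Nat.cast_add, ZMod.natCast_eq_natCast_iff, Nat.modEq_iff_dvd]
  rw [Nat.cast_add]
  exact hfin
end

section
/- Let p and q be distinct primes, M = p·q, λ = lcm(p−1, q−1) with gcd(λ, M) = 1, and define Dec : (ZMod M²)ˣ → ZMod M by Dec(w) = (((w^λ).val − 1)/M : ZMod M) · λ⁻¹. Fix n, ℓ ≥ 1, a database db : Fin n → Fin ℓ → ZMod M, and an index i : Fin n. Let ct : Fin n → (ZMod M²)ˣ be arbitrary units (the client's random ciphertexts), and set, for each j, r_j = Dec(ct_j), p_j = (if j = i then 1 else 0) − r_j ∈ ZMod M, and ct'_j = ct_j · g^(p_j.val), where g is the unit of ZMod M² represented by 1 + M. For each k : Fin ℓ, let ans_k = ∏_{j} (ct'_j)^((db j k).val). Then Dec(ans_k) = db i k for every k. -/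
lemma aux_unit_pow (p q : ℕ) (hp : p.Prime) (hq : q.Prime) (hpq : p ≠ q)
    (u : (ZMod (p * q))ˣ) : u ^ Nat.lcm (p - 1) (q - 1) = 1 := by
  haveI := Fact.mk hp
  haveI := Fact.mk hq
  have hco : Nat.Coprime p q := (Nat.coprime_primes hp hq).mpr hpq
  let e := ZMod.chineseRemainder hco
  apply Units.ext
  have hinj : Function.Injective e := e.injective
  have hu : IsUnit ((e : ZMod (p*q) →+* ZMod p × ZMod q) (u : ZMod (p*q))) :=
    u.isUnit.map _
  have h1 : ((e (u : ZMod (p*q))).1 : ZMod p) ≠ 0 := by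
    have := hu.map (RingHom.fst (ZMod p) (ZMod q))
    simpa using this.ne_zero
  have h2 : ((e (u : ZMod (p*q))).2 : ZMod q) ≠ 0 := by
    have := hu.map (RingHom.snd (ZMod p) (ZMod q))
    simpa using this.ne_zero
  have key : ∀ (m : ℕ) (x : ZMod m) (_ : m.Prime) (_ : x ≠ 0) (l : ℕ),
      (m - 1) ∣ l → x ^ l = 1 := by
    intro m x hm hx l ⟨t, ht⟩
    haveI := Fact.mk hm
    rw [ht, pow_mul, ZMod.pow_card_sub_one_eq_one hx, one_pow]
  have := hinj (a₁ := (u : ZMod (p*q)) ^ Nat.lcm (p-1) (q-1)) (a₂ := 1) ?_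
  · simpa using this
  · rw [map_pow, map_one]
    ext
    · simp [Prod.pow_fst, key p _ hp h1 _ (Nat.dvd_lcm_left _ _)]
    · simp [Prod.pow_snd, key q _ hq h2 _ (Nat.dvd_lcm_right _ _)]

/-- Correctness of PaillierPIR (Theorem C.1): the client extracts exactly
row `i` of the database from the server's homomorphic responses. -/
theorem stmt11 (p q : ℕ) (hp : p.Prime) (hq : q.Prime) (hpq : p ≠ q)
    (M lam : ℕ) (hM : M = p * q) (hlam : lam = Nat.lcm (p - 1) (q - 1))
    (hco : Nat.gcd lam M = 1)
    (Dec : (ZMod (M ^ 2))ˣ → ZMod M)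
    (hDec : ∀ w : (ZMod (M ^ 2))ˣ,
      Dec w = ((((w ^ lam : (ZMod (M ^ 2))ˣ) : ZMod (M ^ 2)).val - 1) / M : ℕ) *
        (lam : ZMod M)⁻¹)
    (n ℓ : ℕ) (hn : 1 ≤ n) (hℓ : 1 ≤ ℓ)
    (db : Fin n → Fin ℓ → ZMod M) (i : Fin n)
    (ct : Fin n → (ZMod (M ^ 2))ˣ)
    (g : (ZMod (M ^ 2))ˣ) (hg : (g : ZMod (M ^ 2)) = 1 + M)
    (r pvec : Fin n → ZMod M)
    (hr : ∀ j, r j = Dec (ct j))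
    (hpv : ∀ j, pvec j = (if j = i then 1 else 0) - r j)
    (ct' : Fin n → (ZMod (M ^ 2))ˣ)
    (hct' : ∀ j, ct' j = ct j * g ^ (pvec j).val)
    (ans : Fin ℓ → (ZMod (M ^ 2))ˣ)
    (hans : ∀ k, ans k = ∏ j, (ct' j) ^ (db j k).val) :
    ∀ k, Dec (ans k) = db i k := by
  have hM1 : 1 < M := by
    have := hp.two_le; have := hq.two_le
    rw [hM]; nlinarith
  haveI : NeZero M := ⟨by omega⟩
  haveI : Fact (1 < M ^ 2) := ⟨by nlinarith⟩
  haveI : NeZero (M ^ 2) := ⟨by positivity⟩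
  have hzero : (M : ZMod (M ^ 2)) * (M : ZMod (M ^ 2)) = 0 := by
    have h0 := ZMod.natCast_self (M ^ 2)
    push_cast at h0
    linear_combination h0
  -- every unit of ZMod M raised to lam is 1
  have hupow : ∀ u : (ZMod M)ˣ, u ^ lam = 1 := by
    subst hM hlam; exact aux_unit_pow p q hp hq hpq
  -- reduction mod M of w^lam is 1
  have hmod : ∀ w : (ZMod (M ^ 2))ˣ,
      (((w : ZMod (M ^ 2)) ^ lam).val : ℕ) ≡ 1 [MOD M] := by
    intro w
    have hdvd : M ∣ M ^ 2 := dvd_pow_self M two_ne_zero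
    set φ := ZMod.castHom hdvd (ZMod M) with hφ
    have hu : IsUnit (φ (w : ZMod (M ^ 2))) := w.isUnit.map φ
    have h1 : (φ (w : ZMod (M ^ 2))) ^ lam = 1 := by
      have := hupow hu.unit
      have h2 := congrArg (Units.val) this
      rw [Units.val_pow_eq_pow_val] at h2
      simpa [hu.unit_spec] using h2
    have h3 : φ ((w : ZMod (M ^ 2)) ^ lam) = 1 := by rw [map_pow, h1]
    have h4 : ((((w : ZMod (M ^ 2)) ^ lam).val : ℕ) : ZMod M) = ((1 : ℕ) : ZMod M) := by
      rw [ZMod.natCast_val, Nat.cast_one]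
      calc ZMod.cast ((w : ZMod (M ^ 2)) ^ lam)
          = φ ((w : ZMod (M ^ 2)) ^ lam) := (ZMod.castHom_apply _).symm
        _ = 1 := h3
    exact (ZMod.natCast_eq_natCast_iff _ _ _).mp h4
  -- the decomposition function
  set c : (ZMod (M ^ 2))ˣ → ℕ :=
    fun w => (((w ^ lam : (ZMod (M ^ 2))ˣ) : ZMod (M ^ 2)).val - 1) / M with hc
  have hDec' : ∀ w, Dec w = (c w : ZMod M) * (lam : ZMod M)⁻¹ := hDec
  have hval : ∀ w : (ZMod (M ^ 2))ˣ,
      ((w ^ lam : (ZMod (M ^ 2))ˣ) : ZMod (M ^ 2)).val = 1 + c w * M := by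
    intro w
    have he : ((w ^ lam : (ZMod (M ^ 2))ˣ) : ZMod (M ^ 2)) = (w : ZMod (M ^ 2)) ^ lam := by
      push_cast; ring
    have hm := hmod w
    rw [← he] at hm
    have hv1 : 1 ≤ ((w ^ lam : (ZMod (M ^ 2))ˣ) : ZMod (M ^ 2)).val := by
      rcases Nat.eq_zero_or_pos ((w ^ lam : (ZMod (M ^ 2))ˣ) : ZMod (M ^ 2)).val with h | h
      · exfalso
        rw [h] at hm
        have : M ∣ 1 := (Nat.modEq_zero_iff_dvd).mp hm.symm
        have := Nat.le_of_dvd one_pos this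
        omega
      · exact h
    have hdv : M ∣ ((w ^ lam : (ZMod (M ^ 2))ˣ) : ZMod (M ^ 2)).val - 1 :=
      (Nat.modEq_iff_dvd' hv1).mp hm.symm
    simp only [hc]
    rw [Nat.div_mul_cancel hdv]
    omega
  have hcast : ∀ w : (ZMod (M ^ 2))ˣ,
      ((w ^ lam : (ZMod (M ^ 2))ˣ) : ZMod (M ^ 2)) = ((1 + c w * M : ℕ) : ZMod (M ^ 2)) := by
    intro w
    rw [← hval w, ZMod.natCast_val, ZMod.cast_id]
  -- congruence extraction
  have hext : ∀ a b : ℕ, ((1 + a * M : ℕ) : ZMod (M ^ 2)) = ((1 + b * M : ℕ) : ZMod (M ^ 2)) →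
      (a : ZMod M) = (b : ZMod M) := by
    intro a b hab
    have h1 : ((1 + a * M : ℕ) : ℤ) ≡ ((1 + b * M : ℕ) : ℤ) [ZMOD (M ^ 2 : ℕ)] :=
      (ZMod.intCast_eq_intCast_iff _ _ _).mp (by push_cast at hab ⊢; exact_mod_cast hab)
    have h2 : ((M : ℤ) ^ 2) ∣ ((1 + (b : ℤ) * M) - (1 + (a : ℤ) * M)) := by
      have := Int.ModEq.dvd h1
      push_cast at this ⊢
      convert this using 1
    have h3 : (M : ℤ) * (M : ℤ) ∣ ((b : ℤ) - (a : ℤ)) * M := by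
      convert h2 using 1 <;> ring
    have hMne : (M : ℤ) ≠ 0 := by exact_mod_cast (by omega : M ≠ 0)
    have h4 : (M : ℤ) ∣ ((b : ℤ) - (a : ℤ)) := by
      rcases h3 with ⟨t, ht⟩
      refine ⟨t, ?_⟩
      have := mul_right_cancel₀ hMne (by linarith [ht] : ((b : ℤ) - a) * M = (M * t) * M)
      linarith
    have h5 : (((b : ℤ) - (a : ℤ) : ℤ) : ZMod M) = 0 :=
      (ZMod.intCast_zmod_eq_zero_iff_dvd _ _).mpr h4
    push_cast at h5
    linear_combination -h5
  -- additivity of c in ZMod M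
  have hcmul : ∀ w₁ w₂ : (ZMod (M ^ 2))ˣ,
      (c (w₁ * w₂) : ZMod M) = (c w₁ : ZMod M) + (c w₂ : ZMod M) := by
    intro w₁ w₂
    have key : (((w₁ * w₂) ^ lam : (ZMod (M ^ 2))ˣ) : ZMod (M ^ 2)) =
        ((w₁ ^ lam : (ZMod (M ^ 2))ˣ) : ZMod (M ^ 2)) *
        ((w₂ ^ lam : (ZMod (M ^ 2))ˣ) : ZMod (M ^ 2)) := by
      push_cast; ring
    have hmm : ((1 + c (w₁ * w₂) * M : ℕ) : ZMod (M ^ 2)) =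
        ((1 + (c w₁ + c w₂) * M : ℕ) : ZMod (M ^ 2)) := by
      rw [← hcast (w₁ * w₂), key, hcast w₁, hcast w₂]
      push_cast
      linear_combination ((c w₁ : ZMod (M ^ 2)) * (c w₂ : ZMod (M ^ 2))) * hzero
    have h6 := hext _ _ hmm
    push_cast at h6
    exact h6
  have hc1 : (c 1 : ZMod M) = 0 := by
    have h1 := hval 1
    have h2 : ((1 ^ lam : (ZMod (M ^ 2))ˣ) : ZMod (M ^ 2)).val = 1 := by
      simp [ZMod.val_one]
    rw [h2] at h1
    have h3 : c 1 * M = 0 := by omega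
    rcases Nat.mul_eq_zero.mp h3 with h | h
    · simp [h]
    · omega
  -- Dec is an additive hom
  have hDmul : ∀ w₁ w₂, Dec (w₁ * w₂) = Dec w₁ + Dec w₂ := by
    intro w₁ w₂
    rw [hDec', hDec', hDec', hcmul, add_mul]
  have hD1 : Dec 1 = 0 := by rw [hDec', hc1, zero_mul]
  have hDpow : ∀ (w : (ZMod (M ^ 2))ˣ) (m : ℕ), Dec (w ^ m) = (m : ZMod M) * Dec w := by
    intro w m
    induction m with
    | zero => simpa using hD1
    | succ m ih => rw [pow_succ, hDmul, ih]; push_cast; ring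
  have hDprod : ∀ (f : Fin n → (ZMod (M ^ 2))ˣ),
      Dec (∏ j, f j) = ∑ j, Dec (f j) := by
    intro f
    induction (Finset.univ : Finset (Fin n)) using Finset.cons_induction with
    | empty => simpa using hD1
    | cons a s ha ih => rw [Finset.prod_cons, Finset.sum_cons, hDmul, ih]
  -- Dec g = 1
  have hgpow : ∀ m : ℕ,
      ((g : ZMod (M ^ 2)) ^ m) = 1 + (m : ZMod (M ^ 2)) * (M : ZMod (M ^ 2)) := by
    intro m
    induction m with
    | zero => simp
    | succ m ih =>
        calc (g : ZMod (M ^ 2)) ^ (m + 1)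
            = ((g : ZMod (M ^ 2)) ^ m) * (g : ZMod (M ^ 2)) := pow_succ _ _
          _ = (1 + (m : ZMod (M ^ 2)) * M) * (1 + (M : ZMod (M ^ 2))) := by rw [ih, hg]
          _ = 1 + ((m + 1 : ℕ) : ZMod (M ^ 2)) * M := by
              push_cast
              linear_combination (m : ZMod (M ^ 2)) * hzero
  have hcg : (c g : ZMod M) = (lam : ZMod M) := by
    have h2 : ((1 + c g * M : ℕ) : ZMod (M ^ 2)) = ((1 + lam * M : ℕ) : ZMod (M ^ 2)) := by
      rw [← hcast g]
      have he : ((g ^ lam : (ZMod (M ^ 2))ˣ) : ZMod (M ^ 2)) = (g : ZMod (M ^ 2)) ^ lam := by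
        push_cast; ring
      rw [he, hgpow lam]
      push_cast
      ring
    exact hext _ _ h2
  have hunit : IsUnit (lam : ZMod M) := by
    rw [ZMod.isUnit_iff_coprime]; exact hco
  have hDg : Dec g = 1 := by
    rw [hDec', hcg, ZMod.mul_inv_of_unit _ hunit]
  -- Dec ct' j is the indicator
  have hDct' : ∀ j, Dec (ct' j) = if j = i then 1 else 0 := by
    intro j
    rw [hct' j, hDmul, hDpow, hDg, mul_one, ← hr j, ZMod.natCast_val, ZMod.cast_id, hpv j]
    ring
  intro k
  rw [hans k, hDprod]
  have hterm : ∀ j, Dec ((ct' j) ^ (db j k).val) = if j = i then db j k else 0 := by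
    intro j
    rw [hDpow, hDct' j]
    by_cases h : j = i
    · simp [h, ZMod.natCast_val, ZMod.cast_id]
    · simp [h]
  simp only [hterm]
  simp
end

section
/- Let R be a commutative ring, N ≥ 1, and let f ∈ R[X] have natDegree f < N. Then X^N + 1 divides f(X^(N+1)) − ∑_{j=0}^{N−1} (−1)^j · (coeff f j) · X^j, where f(X^(N+1)) denotes the composition of f with X^(N+1). -/
open Polynomial

/-- Modulo `X^N + 1`, the substitution `X ↦ X^(N+1)` negates exactly the
odd-degree coefficients of a polynomial `f` of degree less than `N`. -/
theorem stmt14 (R : Type*) [CommRing R] (N : ℕ) (hN : 1 ≤ N)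
    (f : R[X]) (hf : f.natDegree < N) :
    (X ^ N + 1 : R[X]) ∣
      f.comp (X ^ (N + 1)) - ∑ j ∈ Finset.range N, (-1) ^ j * C (f.coeff j) * X ^ j := by
  have hdvd : (X ^ N + 1 : R[X]) ∣ (X ^ (N + 1)) - (-X) := ⟨X, by ring⟩
  nth_rewrite 1 [f.as_sum_range' N hf]
  rw [sum_comp, ← Finset.sum_sub_distrib]
  refine Finset.dvd_sum fun j hj => ?_
  have : (monomial j (f.coeff j)).comp (X ^ (N + 1)) - (-1) ^ j * C (f.coeff j) * X ^ j
      = C (f.coeff j) * ((X ^ (N + 1)) ^ j - (-X) ^ j) := by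
    rw [monomial_comp]; ring
  rw [this]
  exact Dvd.dvd.mul_left (hdvd.trans (sub_dvd_pow_sub_pow _ _ j)) _
end

section
/- Let R be a commutative ring, N ≥ 1, and let f ∈ R[X] have natDegree f < N. Then: (1) X^N + 1 divides (f + f(X^(N+1))) − 2·∑_{j<N, j even} (coeff f j)·X^j, and (2) X^N + 1 divides (f − f(X^(N+1))) − 2·∑_{j<N, j odd} (coeff f j)·X^j, where f(X^(N+1)) denotes the composition of f with X^(N+1). -/
open Polynomial

theorem stmt15_key (R : Type*) [CommRing R] (N : ℕ) (g : R[X]) :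
    (X ^ N + 1 : R[X]) ∣ g.comp (X ^ (N + 1)) - g.comp (-X) := by
  have h := sub_dvd_eval_sub (X ^ (N+1) : R[X]) (-X) (g.map C)
  rw [eval_map, eval_map] at h
  have heq : g.comp (X ^ (N+1)) - g.comp (-X)
      = eval₂ C (X^(N+1)) g - eval₂ C (-X) g := rfl
  rw [heq]
  refine dvd_trans ?_ h
  have h2 : (X ^ (N+1) - (-X) : R[X]) = (X ^ N + 1) * X := by ring
  rw [h2]; exact dvd_mul_right _ _

/-- Plaintext-level correctness of one step of oblivious expansion:
modulo `X^N + 1`, `f + f(X^(N+1))` equals twice the even-degree part of `f`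
and `f − f(X^(N+1))` equals twice the odd-degree part of `f`. -/
theorem stmt15 (R : Type*) [CommRing R] (N : ℕ) (hN : 1 ≤ N)
    (f : R[X]) (hf : f.natDegree < N) :
    ((X ^ N + 1 : R[X]) ∣
      (f + f.comp (X ^ (N + 1))) -
        2 * ∑ j ∈ (Finset.range N).filter (fun j => Even j), C (f.coeff j) * X ^ j) ∧
    ((X ^ N + 1 : R[X]) ∣
      (f - f.comp (X ^ (N + 1))) -
        2 * ∑ j ∈ (Finset.range N).filter (fun j => Odd j), C (f.coeff j) * X ^ j) := by
  have key := stmt15_key R N f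
  have hrep : f = ∑ j ∈ Finset.range N, C (f.coeff j) * X ^ j := by
    conv_lhs => rw [f.as_sum_range' N hf]
    simp [Polynomial.C_mul_X_pow_eq_monomial]
  have hcompneg : f.comp (-X) = ∑ j ∈ Finset.range N, C (f.coeff j) * ((-1)^j * X ^ j) := by
    conv_lhs => rw [hrep]
    rw [sum_comp]
    refine Finset.sum_congr rfl fun j _ => ?_
    rw [mul_comp, C_comp, pow_comp, X_comp, neg_pow]
  have heven : f + f.comp (-X)
      = 2 * ∑ j ∈ (Finset.range N).filter (fun j => Even j), C (f.coeff j) * X ^ j := by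
    nth_rewrite 1 [hrep]
    rw [hcompneg, Finset.mul_sum, Finset.sum_filter, ← Finset.sum_add_distrib]
    refine Finset.sum_congr rfl fun j _ => ?_
    rcases Nat.even_or_odd j with hj | hj
    · rw [if_pos hj, hj.neg_one_pow]; ring
    · rw [if_neg (by simpa using hj), hj.neg_one_pow]; ring
  have hodd : f - f.comp (-X)
      = 2 * ∑ j ∈ (Finset.range N).filter (fun j => Odd j), C (f.coeff j) * X ^ j := by
    nth_rewrite 1 [hrep]
    rw [hcompneg, Finset.mul_sum, Finset.sum_filter, ← Finset.sum_sub_distrib]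
    refine Finset.sum_congr rfl fun j _ => ?_
    rcases Nat.even_or_odd j with hj | hj
    · rw [if_neg (by simpa using hj), hj.neg_one_pow]; ring
    · rw [if_pos hj, hj.neg_one_pow]; ring
  constructor
  · have : (f + f.comp (X ^ (N + 1))) -
        2 * ∑ j ∈ (Finset.range N).filter (fun j => Even j), C (f.coeff j) * X ^ j
        = (f.comp (X ^ (N + 1)) - f.comp (-X)) + ((f + f.comp (-X)) -
          2 * ∑ j ∈ (Finset.range N).filter (fun j => Even j), C (f.coeff j) * X ^ j) := by
      ring
    rw [this, heven]
    simpa using key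
  · have : (f - f.comp (X ^ (N + 1))) -
        2 * ∑ j ∈ (Finset.range N).filter (fun j => Odd j), C (f.coeff j) * X ^ j
        = -(f.comp (X ^ (N + 1)) - f.comp (-X)) + ((f - f.comp (-X)) -
          2 * ∑ j ∈ (Finset.range N).filter (fun j => Odd j), C (f.coeff j) * X ^ j) := by
      ring
    rw [this, hodd]
    simpa using (key.neg_right)
end
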